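/- Let P be a non-trivial product distribution on {0,1}^n (independent coordinates with 0 < p_j = Pr[z_j = 1] < 1 for all j), and let ℓ ∈ {0,1,...,n-1}. Then there exists a probability distribution on pairs (c_ℓ, c_{ℓ+1}), where c_ℓ is a subset of [n] of size ℓ and c_{ℓ+1} is a subset of [n] of size ℓ+1, such that: (1) c_ℓ ⊂ c_{ℓ+1} with probability 1; (2) c_ℓ is distributed according to P_ℓ; (3) c_{ℓ+1} is distributed according to P_{ℓ+1}. -/

import Mathlib

/-!
Put `w j = p j / (1 - p j)`. Then `P_k` gives a `k`-set `s` mass `(∏ j ∈ s, w j) / e_k`, where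
`e_k` is the `k`-th elementary symmetric polynomial of the weights. Clearing denominators, it
suffices to couple `e_{k+1} · ∏_s w` on `k`-sets with `e_k · ∏_s w` on `(k+1)`-sets along
inclusion, which is done by induction on the ground set. When an element `a` is added, the pairs
of level `k + 1` containing `a` on both sides come from the level-`k` coupling with `a` inserted,
those avoiding `a` from the old level-`(k+1)` coupling, and the remaining mass sits on the pairs
`(s, insert a s)`. Its weight `w a · (e_{k+1}² - e_k e_{k+2})` is nonnegative because the
elementary symmetric polynomials of positive numbers are log-concave.
-/

open Finset

/-- The probability that a sample from the product distribution on `{0,1}^n`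
with parameters `p` equals the indicator vector of the set `s ⊆ [n]`. -/
def prodWeight {n : ℕ} (p : Fin n → ℝ) (s : Finset (Fin n)) : ℝ :=
  (∏ j ∈ s, p j) * ∏ j ∈ sᶜ, (1 - p j)

/-- The conditioned measure `P_ℓ`: the probability, under the product distribution
with parameters `p` conditioned on `|z| = ℓ`, of the set `s` (it is `0` unless
`|s| = ℓ`). -/
noncomputable def condWeight {n : ℕ} (p : Fin n → ℝ) (ℓ : ℕ) (s : Finset (Fin n)) : ℝ :=
  (if s.card = ℓ then prodWeight p s else 0) /
    ∑ u ∈ Finset.univ.filter (fun u : Finset (Fin n) => u.card = ℓ), prodWeight p u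

structure IsCoupling {β : Type*} (S : Finset β) (R : β → β → Prop) (f g : β → ℝ)
    (μ : β × β → ℝ) : Prop where
  nonneg : ∀ c, 0 ≤ μ c
  rel : ∀ c, μ c ≠ 0 → R c.1 c.2
  sum_fst : ∀ x ∈ S, ∑ y ∈ S, μ (x, y) = f x
  sum_snd : ∀ y ∈ S, ∑ x ∈ S, μ (x, y) = g y

namespace IsCoupling

variable {β : Type*} {S : Finset β} {R : β → β → Prop} {f g f' g' : β → ℝ} {μ ν : β × β → ℝ}

theorem zero (hf : ∀ x ∈ S, f x = 0) (hg : ∀ y ∈ S, g y = 0) : IsCoupling S R f g 0 where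
  nonneg _ := le_rfl
  rel _ h := absurd rfl h
  sum_fst x hx := by simp [hf x hx]
  sum_snd y hy := by simp [hg y hy]

theorem add (hμ : IsCoupling S R f g μ) (hν : IsCoupling S R f' g' ν) :
    IsCoupling S R (f + f') (g + g') (μ + ν) where
  nonneg c := add_nonneg (hμ.nonneg c) (hν.nonneg c)
  rel c h := by
    by_cases hc : μ c = 0
    · exact hν.rel c (by simpa [hc] using h)
    · exact hμ.rel c hc
  sum_fst x hx := by simp [sum_add_distrib, hμ.sum_fst x hx, hν.sum_fst x hx]
  sum_snd y hy := by simp [sum_add_distrib, hμ.sum_snd y hy, hν.sum_snd y hy]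

theorem smul (hμ : IsCoupling S R f g μ) {r : ℝ} (hr : 0 ≤ r) :
    IsCoupling S R (r • f) (r • g) (r • μ) where
  nonneg c := mul_nonneg hr (hμ.nonneg c)
  rel c h := hμ.rel c (right_ne_zero_of_mul h)
  sum_fst x hx := by simp [← mul_sum, hμ.sum_fst x hx]
  sum_snd y hy := by simp [← mul_sum, hμ.sum_snd y hy]

theorem sum_product_eq (hμ : IsCoupling S R f g μ) : ∑ c ∈ S ×ˢ S, μ c = ∑ x ∈ S, f x := by
  rw [Finset.sum_product]
  exact sum_congr rfl hμ.sum_fst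

end IsCoupling

section PowersetInsert

variable {α : Type*} [DecidableEq α] {a : α} {A : Finset α}

theorem sum_powerset_insert_ite_mem (ha : a ∉ A) (h : Finset α → ℝ) :
    ∑ s ∈ (insert a A).powerset, (if a ∈ s then h (s.erase a) else 0) =
      ∑ s ∈ A.powerset, h s := by
  have hA : ∀ s ∈ A.powerset, a ∉ s := fun s hs => notMem_mono (mem_powerset.1 hs) ha
  rw [sum_powerset_insert ha, sum_eq_zero fun s hs => if_neg (hA s hs), zero_add]
  exact sum_congr rfl fun s hs => by rw [if_pos (mem_insert_self a s), erase_insert (hA s hs)]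

theorem sum_powerset_insert_ite_notMem (ha : a ∉ A) (h : Finset α → ℝ) :
    ∑ s ∈ (insert a A).powerset, (if a ∉ s then h s else 0) = ∑ s ∈ A.powerset, h s := by
  have hA : ∀ s ∈ A.powerset, a ∉ s := fun s hs => notMem_mono (mem_powerset.1 hs) ha
  rw [sum_powerset_insert ha, sum_congr rfl fun s hs => if_pos (hA s hs),
    sum_eq_zero fun s _ => if_neg (not_not.2 (mem_insert_self a s)), add_zero]

variable {R R' : Finset α → Finset α → Prop} {f g : Finset α → ℝ} {μ : Finset α × Finset α → ℝ}

theorem IsCoupling.mapInsert (hμ : IsCoupling A.powerset R f g μ) (ha : a ∉ A)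
    (hR : ∀ s t, R s t → a ∉ s → a ∉ t → R' (insert a s) (insert a t)) :
    IsCoupling (insert a A).powerset R'
      (fun s => if a ∈ s then f (s.erase a) else 0) (fun t => if a ∈ t then g (t.erase a) else 0)
      (fun c => if a ∈ c.1 ∧ a ∈ c.2 then μ (c.1.erase a, c.2.erase a) else 0) where
  nonneg c := by
    split_ifs
    exacts [hμ.nonneg _, le_rfl]
  rel := by
    rintro ⟨s, t⟩ h
    split_ifs at h with hst
    · simpa only [insert_erase hst.1, insert_erase hst.2] using
        hR _ _ (hμ.rel _ h) (notMem_erase a s) (notMem_erase a t)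
    · exact absurd rfl h
  sum_fst s hs := by
    by_cases has : a ∈ s
    · simp only [has, true_and, if_true]
      rw [sum_powerset_insert_ite_mem ha fun t => μ (s.erase a, t)]
      exact hμ.sum_fst _ (mem_powerset.2 (subset_insert_iff.1 (mem_powerset.1 hs)))
    · simp [has]
  sum_snd t ht := by
    by_cases hat : a ∈ t
    · simp only [hat, and_true, if_true]
      rw [sum_powerset_insert_ite_mem ha fun s => μ (s, t.erase a)]
      exact hμ.sum_snd _ (mem_powerset.2 (subset_insert_iff.1 (mem_powerset.1 ht)))
    · simp [hat]

theorem IsCoupling.extendInsert (hμ : IsCoupling A.powerset R f g μ) (ha : a ∉ A) :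
    IsCoupling (insert a A).powerset R
      (fun s => if a ∉ s then f s else 0) (fun t => if a ∉ t then g t else 0)
      (fun c => if a ∉ c.1 ∧ a ∉ c.2 then μ c else 0) where
  nonneg c := by
    split_ifs
    exacts [hμ.nonneg _, le_rfl]
  rel c h := by
    split_ifs at h
    · exact hμ.rel c h
    · exact absurd rfl h
  sum_fst s hs := by
    by_cases has : a ∈ s
    · simp [has]
    · simp only [has, not_false_eq_true, true_and, if_true]
      rw [sum_powerset_insert_ite_notMem ha fun t => μ (s, t)]
      exact hμ.sum_fst _ (mem_powerset.2 ((subset_insert_iff_of_notMem has).1 (mem_powerset.1 hs)))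
  sum_snd t ht := by
    by_cases hat : a ∈ t
    · simp [hat]
    · simp only [hat, not_false_eq_true, and_true, if_true]
      rw [sum_powerset_insert_ite_notMem ha fun s => μ (s, t)]
      exact hμ.sum_snd _ (mem_powerset.2 ((subset_insert_iff_of_notMem hat).1 (mem_powerset.1 ht)))

theorem isCoupling_insertDiag {h : Finset α → ℝ} (hh : ∀ s, 0 ≤ h s)
    (hR : ∀ s, h s ≠ 0 → a ∉ s → R s (insert a s)) :
    IsCoupling (insert a A).powerset R
      (fun s => if a ∉ s then h s else 0) (fun t => if a ∈ t then h (t.erase a) else 0)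
      (fun c => if a ∉ c.1 ∧ c.2 = insert a c.1 then h c.1 else 0) where
  nonneg c := by
    split_ifs
    exacts [hh _, le_rfl]
  rel := by
    rintro ⟨s, t⟩ hst
    split_ifs at hst with hs
    · exact hs.2 ▸ hR s hst hs.1
    · exact absurd rfl hst
  sum_fst s hs := by
    by_cases has : a ∉ s
    · have : insert a s ∈ (insert a A).powerset := mem_powerset.2
        (insert_subset_insert a ((subset_insert_iff_of_notMem has).1 (mem_powerset.1 hs)))
      simp [has, this]
    · simp [has]
  sum_snd t ht := by
    by_cases hat : a ∈ t
    · have key : ∀ s, (a ∉ s ∧ t = insert a s) ↔ s = t.erase a := fun s =>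
        ⟨fun ⟨hs, hts⟩ => hts ▸ (erase_insert hs).symm,
          fun hs => hs ▸ ⟨notMem_erase a t, (insert_erase hat).symm⟩⟩
      have : t.erase a ∈ (insert a A).powerset :=
        mem_powerset.2 ((erase_subset a t).trans (mem_powerset.1 ht))
      simp [key, hat, this]
    · have : ∀ s, ¬(a ∉ s ∧ t = insert a s) := fun s hs => hat (hs.2 ▸ mem_insert_self a s)
      simp [this, hat]

end PowersetInsert

def SubsetStep {α : Type*} (k : ℕ) (s t : Finset α) : Prop :=
  s ⊆ t ∧ s.card = k ∧ t.card = k + 1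

namespace SubsetStep

variable {α : Type*} {k : ℕ} {s t : Finset α}

theorem ssubset (h : SubsetStep k s t) : s ⊂ t :=
  h.1.ssubset_of_ne fun hst => by
    have := h.2.2
    rw [← hst, h.2.1] at this
    omega

variable [DecidableEq α] {a : α}

theorem insert_insert (h : SubsetStep k s t) (hs : a ∉ s) (ht : a ∉ t) :
    SubsetStep (k + 1) (insert a s) (insert a t) :=
  ⟨insert_subset_insert a h.1, by rw [card_insert_of_notMem hs, h.2.1],
    by rw [card_insert_of_notMem ht, h.2.2]⟩

theorem self_insert (hs : s.card = k) (ha : a ∉ s) : SubsetStep k s (insert a s) :=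
  ⟨subset_insert a s, hs, by rw [card_insert_of_notMem ha, hs]⟩

end SubsetStep

section Slice

variable {α : Type*} (w : α → ℝ)

def sliceWeight (k : ℕ) (s : Finset α) : ℝ :=
  if s.card = k then ∏ j ∈ s, w j else 0

def sliceMass (A : Finset α) (k : ℕ) : ℝ :=
  ∑ s ∈ A.powerset, sliceWeight w k s

theorem sliceMass_eq_sum_powersetCard (A : Finset α) (k : ℕ) :
    sliceMass w A k = ∑ s ∈ A.powersetCard k, ∏ j ∈ s, w j := by
  rw [sliceMass, powersetCard_eq_filter, sum_filter]
  rfl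

theorem sliceMass_zero (A : Finset α) : sliceMass w A 0 = 1 := by
  rw [sliceMass_eq_sum_powersetCard, powersetCard_zero, sum_singleton, prod_empty]

variable {w}

theorem sliceWeight_nonneg (hw : ∀ j, 0 ≤ w j) (k : ℕ) (s : Finset α) :
    0 ≤ sliceWeight w k s := by
  unfold sliceWeight
  split_ifs
  exacts [prod_nonneg fun j _ => hw j, le_rfl]

theorem card_eq_of_sliceWeight_ne_zero {k : ℕ} {s : Finset α} (h : sliceWeight w k s ≠ 0) :
    s.card = k := by
  by_contra hk
  exact h (if_neg hk)

theorem sliceWeight_eq_zero_of_card_lt {A s : Finset α} {k : ℕ} (hs : s ⊆ A) (hA : A.card < k) :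
    sliceWeight w k s = 0 :=
  if_neg ((card_le_card hs).trans_lt hA).ne

theorem sliceWeight_succ_of_mem [DecidableEq α] {a : α} {s : Finset α} (ha : a ∈ s) (k : ℕ) :
    sliceWeight w (k + 1) s = w a * sliceWeight w k (s.erase a) := by
  have hcard : (s.erase a).card + 1 = s.card := card_erase_add_one ha
  simp only [sliceWeight, ← hcard, Nat.add_right_cancel_iff, ← mul_prod_erase s w ha]
  split_ifs <;> simp

theorem sliceMass_nonneg (hw : ∀ j, 0 ≤ w j) (A : Finset α) (k : ℕ) : 0 ≤ sliceMass w A k :=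
  sum_nonneg fun s _ => sliceWeight_nonneg hw k s

theorem sliceMass_pos (hw : ∀ j, 0 < w j) {A : Finset α} {k : ℕ} (hk : k ≤ A.card) :
    0 < sliceMass w A k := by
  rw [sliceMass_eq_sum_powersetCard]
  exact sum_pos (fun s _ => prod_pos fun j _ => hw j) (powersetCard_nonempty.2 hk)

variable (w)

theorem sliceMass_eq_zero {A : Finset α} {k : ℕ} (hk : A.card < k) : sliceMass w A k = 0 :=
  sum_eq_zero fun _ hs => sliceWeight_eq_zero_of_card_lt (mem_powerset.1 hs) hk

theorem sliceMass_insert_succ [DecidableEq α] {a : α} {A : Finset α} (ha : a ∉ A) (k : ℕ) :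
    sliceMass w (insert a A) (k + 1) = sliceMass w A (k + 1) + w a * sliceMass w A k := by
  rw [sliceMass, sum_powerset_insert ha, sliceMass, sliceMass, mul_sum]
  congr 1
  refine sum_congr rfl fun s hs => ?_
  rw [sliceWeight_succ_of_mem (mem_insert_self a s),
    erase_insert (notMem_mono (mem_powerset.1 hs) ha)]

variable {w}

theorem sliceMass_mul_le_mul (hw : ∀ j, 0 < w j) {A : Finset α} {k : ℕ}
    (h₁ : sliceMass w A k * sliceMass w A (k + 2) ≤ sliceMass w A (k + 1) ^ 2)
    (h₂ : sliceMass w A (k + 1) * sliceMass w A (k + 3) ≤ sliceMass w A (k + 2) ^ 2) :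
    sliceMass w A k * sliceMass w A (k + 3) ≤ sliceMass w A (k + 1) * sliceMass w A (k + 2) := by
  have hw' : ∀ j, 0 ≤ w j := fun j => (hw j).le
  by_cases hA : A.card < k + 2
  · rw [sliceMass_eq_zero w (by omega : A.card < k + 3), mul_zero]
    exact mul_nonneg (sliceMass_nonneg hw' A _) (sliceMass_nonneg hw' A _)
  · have hb := sliceMass_pos hw (by omega : k + 1 ≤ A.card)
    have hc := sliceMass_pos hw (by omega : k + 2 ≤ A.card)
    have := mul_le_mul h₁ h₂ (mul_nonneg hb.le (sliceMass_nonneg hw' A _)) (sq_nonneg _)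
    nlinarith [mul_pos hb hc]

theorem sliceMass_mul_le_sq [DecidableEq α] (hw : ∀ j, 0 < w j) (A : Finset α) (k : ℕ) :
    sliceMass w A k * sliceMass w A (k + 2) ≤ sliceMass w A (k + 1) ^ 2 := by
  have hw' : ∀ j, 0 ≤ w j := fun j => (hw j).le
  induction A using Finset.induction_on generalizing k with
  | empty =>
    rw [sliceMass_eq_zero w (k := k + 2) (by simp), mul_zero]
    exact sq_nonneg _
  | insert a A ha ih =>
    cases k with
    | zero =>
      have h₀ := ih 0
      rw [sliceMass_zero] at h₀ ⊢
      rw [sliceMass_insert_succ w ha, sliceMass_insert_succ w ha, sliceMass_zero]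
      nlinarith [hw a, sliceMass_nonneg hw' A 1]
    | succ k =>
      have hcross := sliceMass_mul_le_mul hw (ih k) (ih (k + 1))
      rw [sliceMass_insert_succ w ha, sliceMass_insert_succ w ha, sliceMass_insert_succ w ha]
      nlinarith [ih k, ih (k + 1), mul_le_mul_of_nonneg_left hcross (hw a).le,
        mul_le_mul_of_nonneg_left (ih k) (sq_nonneg (w a))]

end Slice

section SliceCoupling

variable {α : Type*} {w : α → ℝ}

theorem exists_isCoupling_slice_of_card_le {A : Finset α} {k : ℕ} (hk : A.card ≤ k) :
    ∃ μ, IsCoupling A.powerset (SubsetStep k)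
      (sliceMass w A (k + 1) • sliceWeight w k) (sliceMass w A k • sliceWeight w (k + 1)) μ :=
  ⟨0, .zero (fun _ _ => by simp [sliceMass_eq_zero w (Nat.lt_succ_of_le hk)])
    fun _ hs => by
      simp [sliceWeight_eq_zero_of_card_lt (mem_powerset.1 hs) (Nat.lt_succ_of_le hk)]⟩

variable [DecidableEq α]

theorem exists_isCoupling_slice_zero (hw : ∀ j, 0 ≤ w j) (A : Finset α) :
    ∃ μ, IsCoupling A.powerset (SubsetStep 0)
      (sliceMass w A 1 • sliceWeight w 0) (sliceMass w A 0 • sliceWeight w 1) μ := by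
  refine ⟨fun c => if c.1 = ∅ then sliceWeight w 1 c.2 else 0,
    ⟨fun c => ?_, ?_, fun s _ => ?_, fun t _ => ?_⟩⟩
  · split_ifs
    exacts [sliceWeight_nonneg hw 1 _, le_rfl]
  · rintro ⟨s, t⟩ h
    split_ifs at h with hs
    · exact hs ▸ ⟨empty_subset t, card_empty, card_eq_of_sliceWeight_ne_zero h⟩
    · exact absurd rfl h
  · by_cases hs : s = ∅
    · simp [hs, sliceMass, sliceWeight]
    · simp [hs, sliceWeight]
  · simp [sliceMass_zero]

theorem exists_isCoupling_slice_insert (hw : ∀ j, 0 < w j) {a : α} {A : Finset α} (ha : a ∉ A)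
    {k : ℕ} (hk : k + 1 ≤ A.card) {μ₁ μ₃ : Finset α × Finset α → ℝ}
    (h₁ : IsCoupling A.powerset (SubsetStep k)
      (sliceMass w A (k + 1) • sliceWeight w k) (sliceMass w A k • sliceWeight w (k + 1)) μ₁)
    (h₃ : IsCoupling A.powerset (SubsetStep (k + 1))
      (sliceMass w A (k + 2) • sliceWeight w (k + 1))
      (sliceMass w A (k + 1) • sliceWeight w (k + 2)) μ₃) :
    ∃ μ, IsCoupling (insert a A).powerset (SubsetStep (k + 1))
      (sliceMass w (insert a A) (k + 2) • sliceWeight w (k + 1))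
      (sliceMass w (insert a A) (k + 1) • sliceWeight w (k + 2)) μ := by
  have hw' : ∀ j, 0 ≤ w j := fun j => (hw j).le
  rw [sliceMass_insert_succ w ha (k + 1), sliceMass_insert_succ w ha k]
  set e := sliceMass w A
  have he : ∀ j, 0 ≤ e j := sliceMass_nonneg hw' A
  have hpos : 0 < e (k + 1) := sliceMass_pos hw hk
  -- The three weights are forced by the marginals; only the diagonal one needs log-concavity.
  have hα : 0 ≤ w a * (e (k + 2) + w a * e (k + 1)) :=
    mul_nonneg (hw' a) (add_nonneg (he _) (mul_nonneg (hw' a) (he _)))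
  have hβ : 0 ≤ e (k + 1) + w a * e k := add_nonneg (he _) (mul_nonneg (hw' a) (he _))
  have hγ : 0 ≤ w a * (e (k + 1) ^ 2 - e k * e (k + 2)) :=
    mul_nonneg (hw' a) (sub_nonneg.2 (sliceMass_mul_le_sq hw A k))
  have B₁ := h₁.mapInsert ha fun s t hst hs ht => hst.insert_insert hs ht
  have B₂ := isCoupling_insertDiag (a := a) (A := A) (R := SubsetStep (k + 1))
    (sliceWeight_nonneg hw' (k + 1)) fun s hs ha => .self_insert (card_eq_of_sliceWeight_ne_zero hs) ha
  have B₃ := h₃.extendInsert ha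
  have B := (((B₁.smul hα).add (B₂.smul hγ)).add (B₃.smul hβ)).smul (inv_nonneg.2 hpos.le)
  convert Exists.intro _ B using 2 <;> funext s <;> by_cases has : a ∈ s <;>
    simp only [Pi.smul_apply, Pi.add_apply, smul_eq_mul, has, if_true, if_false,
      not_true_eq_false, not_false_eq_true]
  · rw [sliceWeight_succ_of_mem has]
    field_simp
    ring
  · field_simp
    ring
  · rw [sliceWeight_succ_of_mem has]
    field_simp
    ring
  · field_simp
    ring

theorem exists_isCoupling_slice (hw : ∀ j, 0 < w j) (A : Finset α) (k : ℕ) :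
    ∃ μ, IsCoupling A.powerset (SubsetStep k)
      (sliceMass w A (k + 1) • sliceWeight w k) (sliceMass w A k • sliceWeight w (k + 1)) μ := by
  induction A using Finset.induction_on generalizing k with
  | empty => exact exists_isCoupling_slice_of_card_le (Nat.zero_le k)
  | insert a A ha ih =>
    cases k with
    | zero => exact exists_isCoupling_slice_zero (fun j => (hw j).le) _
    | succ k =>
      by_cases hk : k + 1 ≤ A.card
      · obtain ⟨μ₁, h₁⟩ := ih k
        obtain ⟨μ₃, h₃⟩ := ih (k + 1)
        exact exists_isCoupling_slice_insert hw ha hk h₁ h₃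
      · exact exists_isCoupling_slice_of_card_le (by rw [card_insert_of_notMem ha]; omega)

theorem exists_isCoupling_sliceWeight_div (hw : ∀ j, 0 < w j) {A : Finset α} {k : ℕ}
    (hk : k < A.card) :
    ∃ μ, IsCoupling A.powerset (SubsetStep k) (fun s => sliceWeight w k s / sliceMass w A k)
      (fun s => sliceWeight w (k + 1) s / sliceMass w A (k + 1)) μ := by
  obtain ⟨μ, hμ⟩ := exists_isCoupling_slice hw A k
  have h₀ := sliceMass_pos hw hk.le
  have h₁ := sliceMass_pos hw hk
  convert Exists.intro _ (hμ.smul (inv_nonneg.2 (mul_pos h₀ h₁).le)) using 2 <;> funext s <;>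
    simp only [Pi.smul_apply, smul_eq_mul] <;> field_simp

end SliceCoupling

theorem prodWeight_eq {n : ℕ} {p : Fin n → ℝ} (hp : ∀ j, p j ≠ 1) (s : Finset (Fin n)) :
    prodWeight p s = (∏ j, (1 - p j)) * ∏ j ∈ s, p j / (1 - p j) := by
  have hs : ∏ j ∈ s, (1 - p j) ≠ 0 := prod_ne_zero_iff.2 fun j _ => sub_ne_zero.2 (hp j).symm
  rw [prodWeight, ← prod_mul_prod_compl s, prod_div_distrib]
  field_simp

theorem condWeight_eq {n : ℕ} {p : Fin n → ℝ} (hp : ∀ j, p j ≠ 1) (k : ℕ) (s : Finset (Fin n)) :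
    condWeight p k s = sliceWeight (fun j => p j / (1 - p j)) k s /
      sliceMass (fun j => p j / (1 - p j)) univ k := by
  have hC : ∏ j, (1 - p j) ≠ 0 := prod_ne_zero_iff.2 fun j _ => sub_ne_zero.2 (hp j).symm
  have key : ∀ t : Finset (Fin n), (if t.card = k then prodWeight p t else 0) =
      (∏ j, (1 - p j)) * sliceWeight (fun j => p j / (1 - p j)) k t := fun t => by
    rw [sliceWeight, mul_ite, mul_zero, prodWeight_eq hp]
  rw [condWeight, sum_filter, key, sum_congr rfl fun t _ => key t, ← mul_sum,
    mul_div_mul_left _ _ hC, sliceMass, powerset_univ]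

/-- **One-step coupling.**  For a non-trivial product distribution `P` on `{0,1}^n`
and `ℓ ∈ {0,…,n-1}`, there is a probability distribution on pairs
`(c_ℓ, c_{ℓ+1})` of subsets of `[n]` with `|c_ℓ| = ℓ`, `|c_{ℓ+1}| = ℓ+1` such that
(1) `c_ℓ ⊂ c_{ℓ+1}` almost surely, (2) `c_ℓ ∼ P_ℓ`, (3) `c_{ℓ+1} ∼ P_{ℓ+1}`. -/
theorem exists_coupled_pair (n ℓ : ℕ) (hℓ : ℓ < n) (p : Fin n → ℝ)
    (hp : ∀ j, 0 < p j ∧ p j < 1) :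
    ∃ μ : Finset (Fin n) × Finset (Fin n) → ℝ,
      (∀ c, 0 ≤ μ c) ∧
      (∑ c, μ c = 1) ∧
      (∀ c : Finset (Fin n) × Finset (Fin n), μ c ≠ 0 →
        c.1 ⊂ c.2 ∧ c.1.card = ℓ ∧ c.2.card = ℓ + 1) ∧
      (∀ s : Finset (Fin n), ∑ s' : Finset (Fin n), μ (s, s') = condWeight p ℓ s) ∧
      (∀ s' : Finset (Fin n), ∑ s : Finset (Fin n), μ (s, s') = condWeight p (ℓ + 1) s') := by
  set w : Fin n → ℝ := fun j => p j / (1 - p j)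
  have hw : ∀ j, 0 < w j := fun j => div_pos (hp j).1 (sub_pos.2 (hp j).2)
  have hcond : ∀ k, condWeight p k = fun s => sliceWeight w k s / sliceMass w univ k :=
    fun k => funext (condWeight_eq (fun j => (hp j).2.ne) k)
  have hℓ' : ℓ < (univ : Finset (Fin n)).card := by simpa using hℓ
  obtain ⟨μ, hμ⟩ := exists_isCoupling_sliceWeight_div hw hℓ'
  rw [powerset_univ] at hμ
  refine ⟨μ, hμ.nonneg, ?_, fun c hc => ?_, fun s => ?_, fun s' => ?_⟩
  · rw [← univ_product_univ, hμ.sum_product_eq, ← sum_div, ← powerset_univ]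
    exact div_self (sliceMass_pos hw hℓ'.le).ne'
  · have hc := hμ.rel c hc
    exact ⟨hc.ssubset, hc.2⟩
  · rw [hcond]
    exact hμ.sum_fst s (mem_univ s)
  · rw [hcond]
    exact hμ.sum_snd s' (mem_univ s')
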